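/- Let 1 ≤ q < ∞ and ε > 0. Choose m ∈ ℤ₊ such that 1 − ε^q Σ_{k=1}^{m} 1/t_k^q ≥ 0 and 1 − ε^q Σ_{k=1}^{m+1} 1/t_k^q < 0 (such m exists since t is bounded away from growth: Σ_{k=1}^{m} 1/t_k^q → ∞). Then E(W^T_q, I_{ε,∞}) = E(W^T_q, I_{ε,∞}, Φ*_m) = ( t_{m+1}^q + ε^q Σ_{k=1}^{m} (1 − t_{m+1}^q/t_k^q) )^{1/q}. -/

import Mathlib

open scoped ENNReal NNReal BigOperators

/-- The `ℓ_q` (quasi-)norm `(∑ |x_k|^q)^{1/q}` of a complex sequence, valued in `ℝ≥0∞`. -/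
noncomputable def lqNorm (q : ℝ) (x : ℕ → ℂ) : ℝ≥0∞ :=
  (∑' k, (‖x k‖₊ : ℝ≥0∞) ^ q) ^ (1 / q)

/-- The class `W^T_q = {Th : h ∈ ℓ_q, ‖h‖_q ≤ 1}`, where `T` is the diagonal operator
determined by the sequence `t` (0-based indexing: `t k` is the paper's `t_{k+1}`). -/
def WT (q : ℝ) (t : ℕ → ℝ) : Set (ℕ → ℂ) :=
  {x | ∃ h : ℕ → ℂ, (∀ k, x k = (t k : ℂ) * h k) ∧ lqNorm q h ≤ 1}

/-- The error `E(W, I, Φ) = sup_{x ∈ W} sup_{a ∈ I x} ‖x - Φ a‖_q` of a recovery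
method `Φ`, measured in `ℓ_q`. -/
noncomputable def recErr {Z : Type*} (q : ℝ) (W : Set (ℕ → ℂ))
    (I : (ℕ → ℂ) → Set Z) (Φ : Z → ℕ → ℂ) : ℝ≥0∞ :=
  ⨆ x ∈ W, ⨆ a ∈ I x, lqNorm q (fun k => x k - Φ a k)

/-- The error of optimal recovery `E(W, I) = inf_Φ E(W, I, Φ)`. -/
noncomputable def optErr {Z : Type*} (q : ℝ) (W : Set (ℕ → ℂ))
    (I : (ℕ → ℂ) → Set Z) : ℝ≥0∞ :=
  ⨅ Φ : Z → ℕ → ℂ, recErr q W I Φ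

/-- The method `Φ*_m(a) = (a_1(1 − t_{m+1}^q/t_1^q), …, a_m(1 − t_{m+1}^q/t_m^q), 0, …)`
for information consisting of the first `n` coordinates (0-based: `t m` is the paper's
`t_{m+1}`); `PhiStar q t n 0` is the zero method `Φ*_0`. -/
noncomputable def PhiStar (q : ℝ) (t : ℕ → ℝ) (n m : ℕ) (a : Fin n → ℂ) : ℕ → ℂ :=
  fun k => if h : k < n ∧ k < m then ((1 - t m ^ q / t k ^ q : ℝ) : ℂ) * a ⟨k, h.1⟩ else 0

/-- The method `Φ*_m` for full-sequence information:
`Φ*_m(a) = (a_1(1 − t_{m+1}^q/t_1^q), …, a_m(1 − t_{m+1}^q/t_m^q), 0, …)`. -/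
noncomputable def PhiStarFull (q : ℝ) (t : ℕ → ℝ) (m : ℕ) (a : ℕ → ℂ) : ℕ → ℂ :=
  fun k => if k < m then ((1 - t m ^ q / t k ^ q : ℝ) : ℂ) * a k else 0

/-- The information mapping `I_{ε,∞}(x) = x + B[ε, ℓ_∞] = {a : ‖x − a‖_∞ ≤ ε}`. -/
def infoSupFull (ε : ℝ) (x : ℕ → ℂ) : Set (ℕ → ℂ) :=
  {a | ∀ k, ‖x k - a k‖ ≤ ε}

/-! For `k < m` put `λ_k = t_m^q / t_k^q ∈ [0, 1]`. Then
`x_k - Φ*_m(a)_k = (1 - λ_k)(x_k - a_k) + λ_k x_k`, and convexity of `s ↦ s^q` bounds its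
`q`-th power by `(1 - λ_k) ε^q + t_m^q |h_k|^q`; for `k ≥ m` monotonicity of `t` gives
`|x_k|^q ≤ t_m^q |h_k|^q`. Summing over `k` gives the upper bound.

For the lower bound take `x* = (ε, …, ε, d, 0, …)` with `d` in position `m` and
`d^q = t_m^q (1 - ε^q ∑_{k<m} t_k^{-q})`, so that `‖x* / t‖_q = 1`; the choice of `m` is exactly
`0 ≤ d ≤ ε`. Then `x*` and `-x*` both lie in `W^T_q` and are both compatible with the
information `a = 0`, so any method errs by at least `‖x*‖_q` on one of them, and `‖x*‖_q^q` is
the claimed value. -/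

open MeasureTheory Finset

section LqNorm

variable {q : ℝ}

theorem lqNorm_eq_eLpNorm' (x : ℕ → ℂ) : lqNorm q x = eLpNorm' x q Measure.count := by
  rw [eLpNorm'_eq_lintegral_enorm, lintegral_count]
  rfl

theorem lqNorm_add_le (hq : 1 ≤ q) (u v : ℕ → ℂ) : lqNorm q (u + v) ≤ lqNorm q u + lqNorm q v := by
  simp only [lqNorm_eq_eLpNorm']
  exact eLpNorm'_add_le (.of_discrete) (.of_discrete) hq

theorem lqNorm_neg (x : ℕ → ℂ) : lqNorm q (-x) = lqNorm q x := by
  simp only [lqNorm_eq_eLpNorm', eLpNorm'_neg]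

theorem lqNorm_smul (hq : 0 < q) (c : ℂ) (x : ℕ → ℂ) : lqNorm q (c • x) = ‖c‖ₑ * lqNorm q x := by
  simp only [lqNorm_eq_eLpNorm', eLpNorm'_const_smul c hq]

theorem coe_nnnorm_rpow_eq_ofReal (hq : 0 ≤ q) (z : ℂ) :
    (‖z‖₊ : ℝ≥0∞) ^ q = ENNReal.ofReal (‖z‖ ^ q) := by
  rw [← ENNReal.ofReal_rpow_of_nonneg (norm_nonneg _) hq, ofReal_norm]
  rfl

theorem tsum_rpow_le_one_of_lqNorm_le_one (hq : 0 < q) {x : ℕ → ℂ} (h : lqNorm q x ≤ 1) :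
    ∑' k, (‖x k‖₊ : ℝ≥0∞) ^ q ≤ 1 := by
  rwa [lqNorm, ← ENNReal.one_rpow (1 / q), ENNReal.rpow_le_rpow_iff (by positivity)] at h

theorem lqNorm_le_ofReal_rpow (hq : 0 < q) {x : ℕ → ℂ} {C : ℝ} (hC : 0 ≤ C)
    (h : ∑' k, (‖x k‖₊ : ℝ≥0∞) ^ q ≤ ENNReal.ofReal C) :
    lqNorm q x ≤ ENNReal.ofReal (C ^ (1 / q)) := by
  rw [lqNorm, ← ENNReal.ofReal_rpow_of_nonneg hC (by positivity)]
  gcongr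

theorem lqNorm_eq_of_support (hq : 0 < q) {x : ℕ → ℂ} {s : Finset ℕ} (hs : ∀ k ∉ s, x k = 0) :
    lqNorm q x = ENNReal.ofReal ((∑ k ∈ s, ‖x k‖ ^ q) ^ (1 / q)) := by
  have hsupp : ∀ k ∉ s, (‖x k‖₊ : ℝ≥0∞) ^ q = 0 := fun k hk => by
    simp [hs k hk, hq]
  rw [lqNorm, tsum_eq_sum hsupp, ← ENNReal.ofReal_rpow_of_nonneg (by positivity) (by positivity),
    ENNReal.ofReal_sum_of_nonneg (fun k _ => by positivity)]
  congr 1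
  exact sum_congr rfl fun k _ => coe_nnnorm_rpow_eq_ofReal hq.le (x k)

end LqNorm

theorem norm_sub_smul_rpow_le {E : Type*} [SeminormedAddCommGroup E] [NormedSpace ℝ E]
    {q c ε : ℝ} (hq : 1 ≤ q) (hc0 : 0 ≤ c) (hc1 : c ≤ 1) {x a : E} (ha : ‖x - a‖ ≤ ε) :
    ‖x - (1 - c) • a‖ ^ q ≤ (1 - c) * ε ^ q + c * ‖x‖ ^ q := by
  have hε : 0 ≤ ε := (norm_nonneg _).trans ha
  have hnorm : ‖x - (1 - c) • a‖ ≤ (1 - c) * ε + c * ‖x‖ :=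
    calc ‖x - (1 - c) • a‖ = ‖(1 - c) • (x - a) + c • x‖ := by
          congr 1; simp only [smul_sub, sub_smul, one_smul]; abel
      _ ≤ (1 - c) * ‖x - a‖ + c * ‖x‖ := by
          refine (norm_add_le _ _).trans ?_
          rw [norm_smul, norm_smul, Real.norm_of_nonneg (by linarith), Real.norm_of_nonneg hc0]
      _ ≤ (1 - c) * ε + c * ‖x‖ := by gcongr
  calc ‖x - (1 - c) • a‖ ^ q ≤ ((1 - c) * ε + c * ‖x‖) ^ q := by gcongr
    _ ≤ (1 - c) * ε ^ q + c * ‖x‖ ^ q :=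
      (convexOn_rpow hq).2 hε (norm_nonneg x) (by linarith) hc0 (by ring)

section Recovery

variable {Z : Type*} {q : ℝ} {W : Set (ℕ → ℂ)} {I : (ℕ → ℂ) → Set Z}

theorem lqNorm_sub_le_recErr (Φ : Z → ℕ → ℂ) {x : ℕ → ℂ} {a : Z} (hx : x ∈ W) (ha : a ∈ I x) :
    lqNorm q (x - Φ a) ≤ recErr q W I Φ :=
  le_iSup₂_of_le x hx (le_iSup₂_of_le a ha le_rfl)

theorem recErr_le {Φ : Z → ℕ → ℂ} {C : ℝ≥0∞}
    (h : ∀ x ∈ W, ∀ a ∈ I x, lqNorm q (x - Φ a) ≤ C) : recErr q W I Φ ≤ C :=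
  iSup₂_le fun x hx => iSup₂_le (h x hx)

theorem lqNorm_le_optErr_of_neg (hq : 1 ≤ q) {x : ℕ → ℂ} {a : Z} (hx : x ∈ W) (hnx : -x ∈ W)
    (ha : a ∈ I x) (hna : a ∈ I (-x)) : lqNorm q x ≤ optErr q W I := by
  refine le_iInf fun Φ => ?_
  have hsplit : (2 : ℂ) • x = (x - Φ a) + -(-x - Φ a) := by
    rw [two_smul]; abel
  have h2 : 2 * lqNorm q x ≤ 2 * recErr q W I Φ :=
    calc 2 * lqNorm q x = lqNorm q ((2 : ℂ) • x) := by
          rw [lqNorm_smul (by linarith)]; simp [enorm_eq_nnnorm]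
      _ ≤ lqNorm q (x - Φ a) + lqNorm q (-x - Φ a) := by
          rw [hsplit, ← lqNorm_neg (-x - Φ a)]; exact lqNorm_add_le hq _ _
      _ ≤ 2 * recErr q W I Φ := by
          rw [two_mul]
          exact add_le_add (lqNorm_sub_le_recErr Φ hx ha) (lqNorm_sub_le_recErr Φ hnx hna)
  exact (ENNReal.mul_le_mul_iff_right two_ne_zero ENNReal.ofNat_ne_top).mp h2

end Recovery

theorem zero_mem_infoSupFull {ε : ℝ} {x : ℕ → ℂ} (hx : ∀ k, ‖x k‖ ≤ ε) :
    0 ∈ infoSupFull ε x ∧ 0 ∈ infoSupFull ε (-x) :=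
  ⟨fun k => by simpa using hx k, fun k => by simpa using hx k⟩

section Diagonal

variable {q : ℝ} {t : ℕ → ℝ}

theorem neg_mem_WT {x : ℕ → ℂ} (hx : x ∈ WT q t) : -x ∈ WT q t := by
  obtain ⟨h, hxh, hh⟩ := hx
  exact ⟨-h, fun k => by simp [hxh k], (lqNorm_neg h).trans_le hh⟩

theorem mem_WT_of_lqNorm_div_le_one (ht : ∀ k, t k ≠ 0) {x : ℕ → ℂ}
    (h : lqNorm q (fun k => x k / t k) ≤ 1) : x ∈ WT q t :=
  ⟨_, fun k => (mul_div_cancel₀ _ (Complex.ofReal_ne_zero.mpr (ht k))).symm, h⟩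

theorem rpow_div_rpow_le_one (hq : 0 ≤ q) (htpos : ∀ k, 0 < t k) (htmono : Antitone t)
    {k m : ℕ} (hkm : k ≤ m) : t m ^ q / t k ^ q ≤ 1 := by
  rw [div_le_one (by have := htpos k; positivity)]
  gcongr
  · exact (htpos m).le
  · exact htmono hkm

theorem norm_sub_PhiStarFull_rpow_le (hq : 1 ≤ q) (htpos : ∀ k, 0 < t k) (htmono : Antitone t)
    {ε : ℝ} {x h a : ℕ → ℂ} (hxh : ∀ k, x k = t k * h k) (ha : a ∈ infoSupFull ε x) (m k : ℕ) :
    ‖x k - PhiStarFull q t m a k‖ ^ q ≤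
      (if k < m then ε ^ q * (1 - t m ^ q / t k ^ q) else 0) + t m ^ q * ‖h k‖ ^ q := by
  have hq0 : 0 ≤ q := by linarith
  have hx : ‖x k‖ ^ q = t k ^ q * ‖h k‖ ^ q := by
    rw [hxh k, norm_mul, Complex.norm_real, Real.norm_of_nonneg (htpos k).le,
      Real.mul_rpow (htpos k).le (norm_nonneg _)]
  by_cases hk : k < m
  · have hc1 := rpow_div_rpow_le_one hq0 htpos htmono hk.le
    have hc0 : 0 ≤ t m ^ q / t k ^ q := by have := htpos m; have := htpos k; positivity
    have htk : t k ^ q ≠ 0 := (Real.rpow_pos_of_pos (htpos k) q).ne'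
    rw [PhiStarFull, if_pos hk, if_pos hk, ← Complex.real_smul]
    refine (norm_sub_smul_rpow_le hq hc0 hc1 (ha k)).trans_eq ?_
    rw [hx]
    field_simp
  · rw [PhiStarFull, if_neg hk, if_neg hk, sub_zero, zero_add, hx]
    gcongr
    · exact (htpos k).le
    · exact htmono (not_lt.mp hk)

theorem recErr_PhiStarFull_le (hq : 1 ≤ q) (htpos : ∀ k, 0 < t k) (htmono : Antitone t)
    (ε : ℝ) (m : ℕ) :
    recErr q (WT q t) (infoSupFull ε) (PhiStarFull q t m) ≤
      ENNReal.ofReal ((t m ^ q + ε ^ q * ∑ k ∈ range m, (1 - t m ^ q / t k ^ q)) ^ (1 / q)) := by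
  have hq0 : 0 < q := by linarith
  refine recErr_le fun x ⟨h, hxh, hh⟩ a ha => ?_
  have hε : 0 ≤ ε := (norm_nonneg _).trans (ha 0)
  have htm : 0 ≤ t m ^ q := by have := htpos m; positivity
  have hc : ∀ k ∈ range m, 0 ≤ ε ^ q * (1 - t m ^ q / t k ^ q) := fun k hk =>
    mul_nonneg (by positivity)
      (sub_nonneg.2 (rpow_div_rpow_le_one hq0.le htpos htmono (mem_range.mp hk).le))
  have hcsum : 0 ≤ ε ^ q * ∑ k ∈ range m, (1 - t m ^ q / t k ^ q) := by
    rw [mul_sum]; exact sum_nonneg hc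
  refine lqNorm_le_ofReal_rpow hq0 (add_nonneg htm hcsum) ?_
  calc ∑' k, (‖x k - PhiStarFull q t m a k‖₊ : ℝ≥0∞) ^ q
      ≤ ∑' k, (ENNReal.ofReal (if k < m then ε ^ q * (1 - t m ^ q / t k ^ q) else 0)
          + ENNReal.ofReal (t m ^ q) * (‖h k‖₊ : ℝ≥0∞) ^ q) := by
        refine ENNReal.tsum_le_tsum fun k => ?_
        have hck : 0 ≤ if k < m then ε ^ q * (1 - t m ^ q / t k ^ q) else 0 := by
          split_ifs with hk
          exacts [hc k (mem_range.2 hk), le_rfl]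
        rw [coe_nnnorm_rpow_eq_ofReal hq0.le, coe_nnnorm_rpow_eq_ofReal hq0.le,
          ← ENNReal.ofReal_mul htm, ← ENNReal.ofReal_add hck (by positivity)]
        exact ENNReal.ofReal_le_ofReal (norm_sub_PhiStarFull_rpow_le hq htpos htmono hxh ha m k)
    _ = ∑ k ∈ range m, ENNReal.ofReal (ε ^ q * (1 - t m ^ q / t k ^ q))
          + ENNReal.ofReal (t m ^ q) * ∑' k, (‖h k‖₊ : ℝ≥0∞) ^ q := by
        rw [ENNReal.tsum_add, ENNReal.tsum_mul_left, tsum_eq_sum (s := range m)]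
        · congr 1
          exact sum_congr rfl fun k hk => by rw [if_pos (mem_range.mp hk)]
        · intro k hk
          rw [if_neg (by simpa using hk), ENNReal.ofReal_zero]
    _ ≤ ENNReal.ofReal (ε ^ q * ∑ k ∈ range m, (1 - t m ^ q / t k ^ q))
          + ENNReal.ofReal (t m ^ q) * 1 := by
        rw [← ENNReal.ofReal_sum_of_nonneg hc, mul_sum]
        gcongr
        exact tsum_rpow_le_one_of_lqNorm_le_one hq0 hh
    _ = ENNReal.ofReal (t m ^ q + ε ^ q * ∑ k ∈ range m, (1 - t m ^ q / t k ^ q)) := by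
        rw [mul_one, add_comm, ENNReal.ofReal_add htm hcsum]

end Diagonal

section Extremal

variable (q : ℝ) (t : ℕ → ℝ) (ε : ℝ) (m : ℕ)

noncomputable def extremalTail : ℝ :=
  (t m ^ q * (1 - ε ^ q * ∑ k ∈ range m, 1 / t k ^ q)) ^ (1 / q)

noncomputable def extremalSeq : ℕ → ℂ :=
  fun k => if k < m then ε else if k = m then extremalTail q t ε m else 0

variable {q t ε m}

theorem extremalTail_nonneg (htpos : ∀ k, 0 < t k)
    (hm : 0 ≤ 1 - ε ^ q * ∑ k ∈ range m, 1 / t k ^ q) : 0 ≤ extremalTail q t ε m := by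
  have := htpos m
  unfold extremalTail
  positivity

theorem extremalTail_rpow (hq : 0 < q) (htpos : ∀ k, 0 < t k)
    (hm : 0 ≤ 1 - ε ^ q * ∑ k ∈ range m, 1 / t k ^ q) :
    extremalTail q t ε m ^ q = t m ^ q * (1 - ε ^ q * ∑ k ∈ range m, 1 / t k ^ q) := by
  have := htpos m
  rw [extremalTail, ← Real.rpow_mul (by positivity), one_div_mul_cancel hq.ne', Real.rpow_one]

theorem extremalTail_le (hq : 0 < q) (htpos : ∀ k, 0 < t k) (hε : 0 ≤ ε)
    (hm : 0 ≤ 1 - ε ^ q * ∑ k ∈ range m, 1 / t k ^ q)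
    (hm' : 1 - ε ^ q * ∑ k ∈ range (m + 1), 1 / t k ^ q < 0) : extremalTail q t ε m ≤ ε := by
  have htm : 0 < t m ^ q := Real.rpow_pos_of_pos (htpos m) q
  have hlt : extremalTail q t ε m ^ q < ε ^ q := by
    rw [extremalTail_rpow hq htpos hm, ← lt_div_iff₀' htm]
    rw [sum_range_succ, mul_add] at hm'
    linarith [mul_one_div (ε ^ q) (t m ^ q)]
  exact (Real.rpow_lt_rpow_iff (extremalTail_nonneg htpos hm) hε hq).mp hlt |>.le

theorem sum_range_succ_extremalSeq (g : ℕ → ℂ → ℝ) :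
    ∑ k ∈ range (m + 1), g k (extremalSeq q t ε m k) =
      ∑ k ∈ range m, g k ε + g m (extremalTail q t ε m) := by
  simp only [sum_range_succ, extremalSeq, lt_irrefl, if_false, if_true]
  congr 1
  exact sum_congr rfl fun k hk => by rw [if_pos (mem_range.mp hk)]

theorem extremalSeq_eq_zero {k : ℕ} (hk : k ∉ range (m + 1)) : extremalSeq q t ε m k = 0 := by
  rw [mem_range, not_lt] at hk
  rw [extremalSeq, if_neg (by omega), if_neg (by omega)]

theorem norm_extremalSeq_le (hq : 0 < q) (htpos : ∀ k, 0 < t k) (hε : 0 ≤ ε)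
    (hm : 0 ≤ 1 - ε ^ q * ∑ k ∈ range m, 1 / t k ^ q)
    (hm' : 1 - ε ^ q * ∑ k ∈ range (m + 1), 1 / t k ^ q < 0) (k : ℕ) :
    ‖extremalSeq q t ε m k‖ ≤ ε := by
  unfold extremalSeq
  split_ifs
  · rw [Complex.norm_real, Real.norm_of_nonneg hε]
  · rw [Complex.norm_real, Real.norm_of_nonneg (extremalTail_nonneg htpos hm)]
    exact extremalTail_le hq htpos hε hm hm'
  · rwa [norm_zero]

theorem lqNorm_extremalSeq (hq : 0 < q) (htpos : ∀ k, 0 < t k) (hε : 0 ≤ ε)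
    (hm : 0 ≤ 1 - ε ^ q * ∑ k ∈ range m, 1 / t k ^ q) :
    lqNorm q (extremalSeq q t ε m) =
      ENNReal.ofReal ((t m ^ q + ε ^ q * ∑ k ∈ range m, (1 - t m ^ q / t k ^ q)) ^ (1 / q)) := by
  rw [lqNorm_eq_of_support hq fun k hk => extremalSeq_eq_zero hk,
    sum_range_succ_extremalSeq fun _ z => ‖z‖ ^ q]
  simp only [Complex.norm_real, Real.norm_of_nonneg hε,
    Real.norm_of_nonneg (extremalTail_nonneg htpos hm), extremalTail_rpow hq htpos hm]
  congr 2
  simp only [sum_const, card_range, nsmul_eq_mul, sum_sub_distrib, mul_one,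
    div_eq_mul_one_div (t m ^ q), ← mul_sum]
  ring

theorem extremalSeq_mem_WT (hq : 0 < q) (htpos : ∀ k, 0 < t k) (hε : 0 ≤ ε)
    (hm : 0 ≤ 1 - ε ^ q * ∑ k ∈ range m, 1 / t k ^ q) : extremalSeq q t ε m ∈ WT q t := by
  refine mem_WT_of_lqNorm_div_le_one (fun k => (htpos k).ne') ?_
  have hsupp : ∀ k ∉ range (m + 1), extremalSeq q t ε m k / t k = 0 := fun k hk => by
    rw [extremalSeq_eq_zero hk, zero_div]
  rw [lqNorm_eq_of_support hq hsupp, sum_range_succ_extremalSeq fun k z => ‖z / t k‖ ^ q]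
  have htm : t m ^ q ≠ 0 := (Real.rpow_pos_of_pos (htpos m) q).ne'
  simp only [← Complex.ofReal_div, Complex.norm_real, Real.norm_eq_abs, abs_div,
    abs_of_nonneg hε, abs_of_nonneg (extremalTail_nonneg htpos hm), abs_of_pos (htpos _)]
  rw [Real.div_rpow (extremalTail_nonneg htpos hm) (htpos m).le, extremalTail_rpow hq htpos hm,
    mul_div_cancel_left₀ _ htm, mul_sum]
  simp only [fun k => Real.div_rpow hε (htpos k).le, mul_one_div, add_sub_cancel,
    Real.one_rpow, ENNReal.ofReal_one, le_refl]

end Extremal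

/-- Theorem 5: optimal recovery of `W^T_q` from the whole sequence known
with an error measured in `ℓ_∞`. -/
theorem optimal_recovery_full_sup_error
    (q : ℝ) (hq : 1 ≤ q)
    (t : ℕ → ℝ) (htpos : ∀ k, 0 < t k) (htmono : Antitone t)
    (ε : ℝ) (hε : 0 < ε) (m : ℕ)
    (hm : 1 - ε ^ q * ∑ k ∈ Finset.range m, 1 / t k ^ q ≥ 0 ∧
          1 - ε ^ q * ∑ k ∈ Finset.range (m + 1), 1 / t k ^ q < 0) :
    optErr q (WT q t) (infoSupFull ε) =
      recErr q (WT q t) (infoSupFull ε) (PhiStarFull q t m) ∧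
    recErr q (WT q t) (infoSupFull ε) (PhiStarFull q t m) =
      ENNReal.ofReal
        ((t m ^ q + ε ^ q * ∑ k ∈ Finset.range m, (1 - t m ^ q / t k ^ q)) ^ (1 / q)) := by
  obtain ⟨hm, hm'⟩ := hm
  have hq0 : 0 < q := by linarith
  have hx := extremalSeq_mem_WT hq0 htpos hε.le hm
  obtain ⟨hinfo, hinfo'⟩ := zero_mem_infoSupFull (norm_extremalSeq_le hq0 htpos hε.le hm hm')
  have hlower := lqNorm_le_optErr_of_neg hq hx (neg_mem_WT hx) hinfo hinfo'
  rw [lqNorm_extremalSeq hq0 htpos hε.le hm] at hlower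
  have hupper := recErr_PhiStarFull_le hq htpos htmono ε m
  have hopt : optErr q (WT q t) (infoSupFull ε) ≤
      recErr q (WT q t) (infoSupFull ε) (PhiStarFull q t m) := iInf_le _ _
  exact ⟨le_antisymm hopt (hupper.trans hlower), le_antisymm hupper (hlower.trans hopt)⟩
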